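/- Let 𝒜 be a Hilbert evolution algebra with a natural orthonormal basis {e_i}_{i∈ℕ}. Then for every n ∈ ℕ, 𝒜^{<n>} ⊆ closed linear span of {e_k : k ∈ D^{n-1}(ℕ)}. -/
import Mathlib


noncomputable section

open scoped ENat

/-! ### Digraph notions associated to a matrix of structural constants

The associated digraph `G(𝒜,𝓑)` has vertex set `ℕ` and a directed edge `(i,k)` iff
`ω i k ≠ 0`. -/

/-- `DsetU ω m U` is the set `D^m(U)` of `m`-th generation descendants of `U`:
`D^0(U) = U` and `D^{m+1}(U) = {k | ∃ i ∈ D^m(U), ω i k ≠ 0}`. -/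
def DsetU (ω : ℕ → ℕ → ℂ) : ℕ → Set ℕ → Set ℕ
  | 0, U => U
  | m + 1, U => {k | ∃ i ∈ DsetU ω m U, ω i k ≠ 0}

/-- `Dm ω m i = D^m(i)`, the `m`-th generation descendants of the vertex `i`. -/
def Dm (ω : ℕ → ℕ → ℂ) (m i : ℕ) : Set ℕ := DsetU ω m {i}

/-- `Desc ω i = D(i) = ⋃_{m ≥ 1} D^m(i)`, the set of descendants of `i`. -/
def Desc (ω : ℕ → ℕ → ℂ) (i : ℕ) : Set ℕ := ⋃ m ∈ {m : ℕ | 1 ≤ m}, Dm ω m i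

/-- `gdist ω i u` is the length of a shortest directed path (walk) from `i` to `u`. -/
def gdist (ω : ℕ → ℕ → ℂ) (i u : ℕ) : ℕ := sInf {n : ℕ | u ∈ Dm ω n i}

/-- The depth `δ(G_i) = sup {dist(i,u) : u ∈ D(i)}` of the subgraph `G_i` induced on the
descendants of `i`, as an extended natural number (`⊤` when unbounded). -/
def depth (ω : ℕ → ℕ → ℂ) (i : ℕ) : ℕ∞ := ⨆ u ∈ Desc ω i, (gdist ω i u : ℕ∞)

/-- `p 0, p 1, …, p n` is an oriented cycle: a non-empty directed path in which the only
repeated vertices are the first and the last one. -/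
def IsOrientedCycle (ω : ℕ → ℕ → ℂ) (n : ℕ) (p : ℕ → ℕ) : Prop :=
  0 < n ∧ (∀ m < n, ω (p m) (p (m + 1)) ≠ 0) ∧ p n = p 0 ∧
    ∀ a b, a < b → b < n → p a ≠ p b

/-- The digraph associated to `ω` contains an oriented cycle. -/
def HasOrientedCycle (ω : ℕ → ℕ → ℂ) : Prop := ∃ n p, IsOrientedCycle ω n p

/-! ### Algebra notions -/

variable {H : Type*} [NormedAddCommGroup H] [InnerProductSpace ℂ H] [CompleteSpace H]

/-- The structural constants of a Hilbert evolution algebra with product `mul` relative to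
the natural orthonormal basis `e`: `ω i k` is the `k`-th coordinate of `e i · e i`,
so that `e i · e i = ∑'_k ω i k • e k`. -/
def structConst (mul : H →ₗ[ℂ] H →ₗ[ℂ] H) (e : HilbertBasis ℕ ℂ H) (i k : ℕ) : ℂ :=
  e.repr (mul (e i) (e i)) k

/-- Principal powers: `ppow mul v n = v^n` for `n ≥ 1` (with the junk value `v` at `n = 0`):
`v^1 = v` and `v^{n+1} = v^n · v`. -/
def ppow (mul : H →ₗ[ℂ] H →ₗ[ℂ] H) (v : H) : ℕ → H
  | 0 => v
  | 1 => v
  | n + 2 => mul (ppow mul v (n + 1)) v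

/-- The algebra is nil: every element has a vanishing principal power. -/
def IsNil (mul : H →ₗ[ℂ] H →ₗ[ℂ] H) : Prop := ∀ v : H, ∃ n : ℕ, 1 ≤ n ∧ ppow mul v n = 0

/-- The product `S·T` of two subspaces: the span of all products `x·y`, `x ∈ S`, `y ∈ T`. -/
def mulSub (mul : H →ₗ[ℂ] H →ₗ[ℂ] H) (S T : Submodule ℂ H) : Submodule ℂ H :=
  Submodule.span ℂ {z : H | ∃ x ∈ S, ∃ y ∈ T, z = mul x y}

/-- The powers `𝒜^n` (for `n ≥ 1`, with the junk value `⊤` at `n = 0`):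
`𝒜^1 = 𝒜` and `𝒜^{n+1} = ∑_{i=1}^{n} 𝒜^i 𝒜^{n+1-i}`. -/
def apow (mul : H →ₗ[ℂ] H →ₗ[ℂ] H) (n : ℕ) : Submodule ℂ H :=
  n.strongRecOn fun n ih =>
    match n, ih with
    | 0, _ => ⊤
    | 1, _ => ⊤
    | m + 2, ih =>
      ⨆ (i : ℕ) (h1 : 1 ≤ i) (h2 : i ≤ m + 1),
        mulSub mul (ih i (by omega)) (ih (m + 2 - i) (by omega))

/-- The algebra is nilpotent: `𝒜^n = 0` for some `n`. -/
def IsNilpotent' (mul : H →ₗ[ℂ] H →ₗ[ℂ] H) : Prop := ∃ n : ℕ, 1 ≤ n ∧ apow mul n = ⊥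

/-- The right powers `𝒜^{<n>}` (for `n ≥ 1`, with the junk value `⊤` at `n = 0`):
`𝒜^{<1>} = 𝒜` and `𝒜^{<n+1>} = 𝒜^{<n>}𝒜`. -/
def rapow (mul : H →ₗ[ℂ] H →ₗ[ℂ] H) : ℕ → Submodule ℂ H
  | 0 => ⊤
  | 1 => ⊤
  | n + 2 => mulSub mul (rapow mul (n + 1)) ⊤

/-- The algebra is right nilpotent: `𝒜^{<n>} = 0` for some `n`. -/
def IsRightNilpotent (mul : H →ₗ[ℂ] H →ₗ[ℂ] H) : Prop := ∃ n : ℕ, 1 ≤ n ∧ rapow mul n = ⊥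

/-- The index of right nilpotency `n_r(𝒜) = min {n : 𝒜^{<n>} = 0}`. -/
def rNilIndex (mul : H →ₗ[ℂ] H →ₗ[ℂ] H) : ℕ := sInf {n : ℕ | 1 ≤ n ∧ rapow mul n = ⊥}

/-- Powers of a subset `I ⊆ 𝒜` (for `n ≥ 1`, with the junk value `I` at `n = 0`):
`I^{<1>} = I` and `I^{<n+1>}` is the set of finite sums `∑_j x_j · y_j` with
`x_j ∈ I^{<n>}` and `y_j ∈ I`. -/
def setPow (mul : H →ₗ[ℂ] H →ₗ[ℂ] H) (I : Set H) : ℕ → Set H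
  | 0 => I
  | 1 => I
  | n + 2 => {v : H | ∃ (m : ℕ) (x y : Fin m → H),
      (∀ j, x j ∈ setPow mul I (n + 1)) ∧ (∀ j, y j ∈ I) ∧
        v = ∑ j, mul (x j) (y j)}

end

noncomputable section

variable {H : Type*} [NormedAddCommGroup H] [InnerProductSpace ℂ H] [CompleteSpace H]

set_option linter.unusedSectionVars false in
lemma mem_closure_span_of_support (e : HilbertBasis ℕ ℂ H) {T : Set ℕ} (v : H)
    (h : ∀ k, e.repr v k ≠ 0 → k ∈ T) :
    v ∈ (Submodule.span ℂ ((fun k : ℕ => e k) '' T)).topologicalClosure := by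
  refine mem_closure_of_tendsto (e.hasSum_repr v) (Filter.Eventually.of_forall ?_)
  intro s
  refine Submodule.sum_mem _ fun k _ => ?_
  by_cases hk : e.repr v k = 0
  · simp [hk]
  · exact Submodule.smul_mem _ _ (Submodule.subset_span ⟨k, h k hk, rfl⟩)


/-- Let `𝒜` be a complex separable Hilbert evolution algebra with natural
orthonormal basis `{e i}` and structural constants `ω`. Then for every `n ≥ 1`,
`𝒜^{<n>} ⊆ closed linear span of {e k : k ∈ D^{n-1}(ℕ)}`. -/
theorem stmt_8
    (mul : H →ₗ[ℂ] H →ₗ[ℂ] H)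
    (hcomm : ∀ x y : H, mul x y = mul y x)
    (hcont : ∀ x : H, Continuous fun y => mul x y)
    (e : HilbertBasis ℕ ℂ H)
    (hnat : ∀ i j : ℕ, i ≠ j → mul (e i) (e j) = 0)
    (ω : ℕ → ℕ → ℂ)
    (hω : ∀ i k : ℕ, ω i k = structConst mul e i k) :
    ∀ n : ℕ, 1 ≤ n →
      rapow mul n ≤
        (Submodule.span ℂ
            ((fun k : ℕ => e k) '' DsetU ω (n - 1) Set.univ)).topologicalClosure := by
  have key : ∀ n : ℕ, rapow mul (n + 1) ≤
      (Submodule.span ℂ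
        ((fun k : ℕ => e k) '' DsetU ω n Set.univ)).topologicalClosure := by
    intro n
    induction n with
    | zero =>
        show rapow mul 1 ≤ _
        rw [show DsetU ω 0 Set.univ = Set.univ from rfl, Set.image_univ]
        rw [show Set.range (fun k : ℕ => e k) = Set.range e from rfl]
        rw [e.dense_span]; exact le_top
    | succ n ih =>
        set M := (Submodule.span ℂ
          ((fun k : ℕ => e k) '' DsetU ω (n + 1) Set.univ)).topologicalClosure with hM
        have hMclosed : IsClosed (M : Set H) := Submodule.isClosed_topologicalClosure _
        -- step: for i ∈ D^n, mul (e i) y ∈ M for all y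
        have step2 : ∀ i ∈ DsetU ω n Set.univ, ∀ y : H, mul (e i) y ∈ M := by
          intro i hi y
          have hself : mul (e i) (e i) ∈ M := by
            refine mem_closure_span_of_support e _ fun k hk => ?_
            exact ⟨i, hi, by rw [hω]; exact hk⟩
          have hall : ∀ j, mul (e i) (e j) ∈ M := by
            intro j
            by_cases hij : i = j
            · subst hij; exact hself
            · rw [hnat i j hij]; exact Submodule.zero_mem _
          have hNclosed : IsClosed ((Submodule.comap (mul (e i)) M : Submodule ℂ H) : Set H) := by
            have : ((Submodule.comap (mul (e i)) M : Submodule ℂ H) : Set H)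
                = (mul (e i)) ⁻¹' (M : Set H) := rfl
            rw [this]
            exact hMclosed.preimage (hcont (e i))
          have hle : (Submodule.span ℂ (Set.range e)).topologicalClosure
              ≤ Submodule.comap (mul (e i)) M := by
            refine Submodule.topologicalClosure_minimal _ ?_ hNclosed
            rw [Submodule.span_le]
            rintro _ ⟨j, rfl⟩
            exact hall j
          have : y ∈ Submodule.comap (mul (e i)) M := by
            apply hle
            rw [e.dense_span]
            trivial
          exact this
        -- step3: x in closure span D^n, any y : mul x y ∈ M
        have step3 : ∀ y : H, ∀ x ∈ (Submodule.span ℂ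
            ((fun k : ℕ => e k) '' DsetU ω n Set.univ)).topologicalClosure,
            mul x y ∈ M := by
          intro y x hx
          have hcont' : Continuous fun x : H => mul x y := by
            have : (fun x : H => mul x y) = fun x => mul y x := funext fun x => hcomm x y
            rw [this]; exact hcont y
          have hNclosed : IsClosed (((Submodule.comap (mul.flip y) M : Submodule ℂ H)) : Set H) := by
            have : (((Submodule.comap (mul.flip y) M : Submodule ℂ H)) : Set H)
                = (fun x : H => mul x y) ⁻¹' (M : Set H) := rfl
            rw [this]
            exact hMclosed.preimage hcont'
          have hle : (Submodule.span ℂ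
              ((fun k : ℕ => e k) '' DsetU ω n Set.univ)).topologicalClosure
              ≤ Submodule.comap (mul.flip y) M := by
            refine Submodule.topologicalClosure_minimal _ ?_ hNclosed
            rw [Submodule.span_le]
            rintro _ ⟨i, hi, rfl⟩
            exact step2 i hi y
          exact hle hx
        show mulSub mul (rapow mul (n + 1)) ⊤ ≤ M
        rw [mulSub, Submodule.span_le]
        rintro _ ⟨x, hx, y, -, rfl⟩
        exact step3 y x (ih hx)
  intro n hn
  obtain ⟨m, rfl⟩ := Nat.exists_eq_add_of_le hn
  rw [add_comm]
  simpa using key m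
end
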